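/- arXiv:1803.00224 — 2 statements merged into one kernel-verified Lean document; each statement's English description precedes it below -/
import Mathlib

section
/- Let S be a measurable set in a metric measure space and 0 < s, p < ∞. If g is an s-gradient of u on S (i.e. |u(x) − u(y)| ≤ d(x,y)^s (g(x) + g(y)) for a.e. x, y ∈ S), then the constant sequence (g_k)_{k∈ℤ} with g_k = g for all k is a fractional s-gradient of u on S, and consequently the Haj\l asz-Sobolev seminorm inf_{g ∈ D^s(u)} ‖g‖_{L^p(S)} equals the Haj\l asz-Triebel-Lizorkin seminorm with q = ∞: ‖u‖_{Ṁ^s_{p,∞}(S)} = ‖u‖_{Ṁ^{s,p}(S)}. -/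
open MeasureTheory
open scoped ENNReal

/-- `(g k)` is a fractional `s`-gradient of `u` on `S`. -/
def IsFractionalSGradient {X : Type*} [MetricSpace X] [MeasurableSpace X]
    (μ : Measure X) (S : Set X) (s : ℝ) (u : X → ℝ) (g : ℤ → X → ℝ) : Prop :=
  (∀ k x, 0 ≤ g k x) ∧
  ∃ E : Set X, E ⊆ S ∧ μ E = 0 ∧
    ∀ (k : ℤ), ∀ x ∈ S \ E, ∀ y ∈ S \ E,
      2 ^ ((k : ℝ) - 1) ≤ dist x y → dist x y < 2 ^ (k : ℝ) →
      |u x - u y| ≤ dist x y ^ s * (g k x + g k y)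

/-- `g` is an `s`-gradient of `u` on `S`. -/
def IsSGradient {X : Type*} [MetricSpace X] [MeasurableSpace X]
    (μ : Measure X) (S : Set X) (s : ℝ) (u : X → ℝ) (g : X → ℝ) : Prop :=
  (∀ x, 0 ≤ g x) ∧
  ∃ E : Set X, E ⊆ S ∧ μ E = 0 ∧
    ∀ x ∈ S \ E, ∀ y ∈ S \ E, |u x - u y| ≤ dist x y ^ s * (g x + g y)

/-- The homogeneous Hajłasz–Triebel–Lizorkin seminorm with `q = ∞`. -/
noncomputable def TLSeminormInfty {X : Type*} [MetricSpace X] [MeasurableSpace X]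
    (μ : Measure X) (S : Set X) (s p : ℝ) (u : X → ℝ) : ℝ≥0∞ :=
  sInf {A : ℝ≥0∞ | ∃ g : ℤ → X → ℝ, IsFractionalSGradient μ S s u g ∧
    A = (∫⁻ x in S, (⨆ k : ℤ, ENNReal.ofReal (g k x)) ^ p ∂μ) ^ (1 / p)}

/-- The homogeneous Hajłasz–Sobolev seminorm. -/
noncomputable def HajlaszSeminorm {X : Type*} [MetricSpace X] [MeasurableSpace X]
    (μ : Measure X) (S : Set X) (s p : ℝ) (u : X → ℝ) : ℝ≥0∞ :=
  sInf {A : ℝ≥0∞ | ∃ g : X → ℝ, IsSGradient μ S s u g ∧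
    A = (∫⁻ x in S, (ENNReal.ofReal (g x)) ^ p ∂μ) ^ (1 / p)}

/-! A Hajłasz gradient is a constant fractional gradient, which gives one inequality. Conversely,
for a fractional gradient `(g k)` the maximal function `N = ⨆ k, g k` is an `s`-gradient wherever
it is finite, by choosing the dyadic scale of `dist x y`. The `g k` need not be measurable, so
`{N = ∞}` need not be null even when `∫ N ^ p < ∞`. What saves the argument is that `u` is
Hölder with constant `2c` on each sublevel set `H c = {N ≤ c}`, so the estimate passes to the
closure of the graph of `u` over `H c`, whose preimage under `x ↦ (x, u x)` is measurable. The
points lying in none of these graph closures form a measurable set on which `N = ∞`, hence a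
null set, and everywhere else the gradient can be taken to be some admissible `c ≤ N x`. -/

open Set

section Dyadic

variable {X : Type*} [MetricSpace X]

lemma exists_two_rpow_sub_one_le_and_lt {d : ℝ} (hd : 0 < d) :
    ∃ k : ℤ, (2 : ℝ) ^ ((k : ℝ) - 1) ≤ d ∧ d < 2 ^ (k : ℝ) := by
  obtain ⟨n, hn, hn'⟩ := exists_mem_Ico_zpow hd one_lt_two
  refine ⟨n + 1, ?_, ?_⟩
  · simpa [Real.rpow_intCast] using hn
  · simpa [← Real.rpow_intCast] using hn'

lemma abs_sub_le_of_dyadic {T : Set X} {s a b : ℝ} {u : X → ℝ} {g : ℤ → X → ℝ}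
    (hg0 : ∀ k x, 0 ≤ g k x)
    (hg : ∀ k : ℤ, ∀ x ∈ T, ∀ y ∈ T, 2 ^ ((k : ℝ) - 1) ≤ dist x y → dist x y < 2 ^ (k : ℝ) →
      |u x - u y| ≤ dist x y ^ s * (g k x + g k y))
    {x y : X} (hx : x ∈ T) (hy : y ∈ T) (hxa : ∀ k, g k x ≤ a) (hyb : ∀ k, g k y ≤ b) :
    |u x - u y| ≤ dist x y ^ s * (a + b) := by
  rcases eq_or_ne x y with rfl | hxy
  · have := (hg0 0 x).trans (hxa 0)
    have := (hg0 0 x).trans (hyb 0)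
    simp only [sub_self, abs_zero]
    positivity
  obtain ⟨k, hk, hk'⟩ := exists_two_rpow_sub_one_le_and_lt (dist_pos.2 hxy)
  calc |u x - u y| ≤ dist x y ^ s * (g k x + g k y) := hg k x hx y hy hk hk'
    _ ≤ dist x y ^ s * (a + b) := by gcongr <;> simp [hxa, hyb]

end Dyadic

section GraphClosure

variable {X : Type*} [MetricSpace X]

def graphClosure (u : X → ℝ) (T : Set X) : Set X :=
  {x | (x, u x) ∈ closure ((fun z => (z, u z)) '' T)}

lemma subset_graphClosure (u : X → ℝ) (T : Set X) : T ⊆ graphClosure u T :=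
  fun x hx => subset_closure ⟨x, hx, rfl⟩

lemma measurableSet_graphClosure [MeasurableSpace X] [BorelSpace X] {u : X → ℝ}
    (hu : Measurable u) (T : Set X) : MeasurableSet (graphClosure u T) :=
  isClosed_closure.measurableSet.preimage (measurable_id.prodMk hu)

lemma abs_sub_le_of_mem_graphClosure {T T' : Set X} {u : X → ℝ} {s c : ℝ} (hs : 0 ≤ s)
    (h : ∀ x ∈ T, ∀ y ∈ T', |u x - u y| ≤ dist x y ^ s * c)
    {x y : X} (hx : x ∈ graphClosure u T) (hy : y ∈ graphClosure u T') :
    |u x - u y| ≤ dist x y ^ s * c := by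
  let P : Set ((X × ℝ) × (X × ℝ)) := {q | |q.1.2 - q.2.2| ≤ dist q.1.1 q.2.1 ^ s * c}
  have hP : IsClosed P :=
    isClosed_le (by fun_prop)
      (((continuous_fst.fst.dist continuous_snd.fst).rpow_const fun _ => Or.inr hs).mul
        continuous_const)
  have hsub : closure (((fun z => (z, u z)) '' T) ×ˢ ((fun z => (z, u z)) '' T')) ⊆ P :=
    closure_minimal (by rintro ⟨_, _⟩ ⟨⟨x, hx, rfl⟩, ⟨y, hy, rfl⟩⟩; exact h x hx y hy) hP
  exact @hsub ((x, u x), (y, u y)) (by rw [closure_prod_eq]; exact ⟨hx, hy⟩)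

end GraphClosure

lemma measure_eq_zero_of_ae_eq_top_of_setLIntegral_ne_top {X : Type*} [MeasurableSpace X]
    {μ : Measure X} {f : X → ℝ≥0∞} {S Z : Set X} (hZ : MeasurableSet Z) (hZS : Z ⊆ S)
    (hf : ∀ᵐ x ∂μ, x ∈ Z → f x = ⊤) (hint : ∫⁻ x in S, f x ∂μ ≠ ⊤) : μ Z = 0 := by
  have hZf : ∫⁻ x in Z, f x ∂μ = ⊤ * μ Z := by
    rw [← setLIntegral_const]
    exact setLIntegral_congr_fun_ae hZ hf
  by_contra hZ0
  refine hint (top_le_iff.1 ?_)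
  calc ⊤ = ∫⁻ x in Z, f x ∂μ := by rw [hZf, ENNReal.top_mul hZ0]
    _ ≤ ∫⁻ x in S, f x ∂μ := lintegral_mono_set hZS

section Gradients

variable {X : Type*} [MetricSpace X] [MeasurableSpace X] {μ : Measure X} {S : Set X} {s p : ℝ}
  {u : X → ℝ}

lemma IsSGradient.isFractionalSGradient_const {g : X → ℝ} (hg : IsSGradient μ S s u g) :
    IsFractionalSGradient μ S s u (fun _ => g) := by
  obtain ⟨hg0, E, hES, hE0, hgE⟩ := hg
  exact ⟨fun _ => hg0, E, hES, hE0, fun _ x hx y hy _ _ => hgE x hx y hy⟩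

lemma IsFractionalSGradient.exists_isSGradient_le [BorelSpace X] {g : ℤ → X → ℝ}
    (hg : IsFractionalSGradient μ S s u g) (hS : MeasurableSet S) (hs : 0 ≤ s) (hp : 0 < p)
    (hu : Measurable u) (hint : ∫⁻ x in S, (⨆ k, ENNReal.ofReal (g k x)) ^ p ∂μ ≠ ⊤) :
    ∃ G : X → ℝ, IsSGradient μ S s u G ∧
      ∀ x, ENNReal.ofReal (G x) ≤ ⨆ k, ENNReal.ofReal (g k x) := by
  obtain ⟨hg0, E, hES, hE0, hgE⟩ := hg
  set N : X → ℝ≥0∞ := fun x => ⨆ k, ENNReal.ofReal (g k x)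
  set H : ℝ → Set X := fun c => {z ∈ S \ E | ∀ k, g k z ≤ c}
  have hHolder : ∀ a b, ∀ x ∈ graphClosure u (H a), ∀ y ∈ graphClosure u (H b),
      |u x - u y| ≤ dist x y ^ s * (a + b) := fun a b x hx y hy =>
    abs_sub_le_of_mem_graphClosure hs
      (fun z hz w hw => abs_sub_le_of_dyadic hg0 hgE hz.1 hw.1 hz.2 hw.2) hx hy
  have mem_H : ∀ x ∈ S \ E, N x ≠ ⊤ → x ∈ H (N x).toReal := fun x hx hNx =>
    ⟨hx, fun k => (ENNReal.ofReal_le_iff_le_toReal hNx).1 <|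
      le_iSup (fun k => ENNReal.ofReal (g k x)) k⟩
  set Z := S \ ⋃ n : ℕ, graphClosure u (H n)
  have hZ : μ Z = 0 := by
    refine measure_eq_zero_of_ae_eq_top_of_setLIntegral_ne_top (f := fun x => N x ^ p)
      (hS.diff (.iUnion fun n => measurableSet_graphClosure hu _)) sdiff_subset ?_ hint
    filter_upwards [measure_eq_zero_iff_ae_notMem.1 hE0] with x hxE hxZ
    suffices N x = ⊤ by simp only [this, ENNReal.top_rpow_of_pos hp]
    by_contra hNx
    obtain ⟨n, hn⟩ := exists_nat_ge (N x).toReal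
    have hxH := mem_H x ⟨hxZ.1, hxE⟩ hNx
    exact hxZ.2 (mem_iUnion.2 ⟨n, subset_graphClosure u _ ⟨hxH.1, fun k => (hxH.2 k).trans hn⟩⟩)
  have exists_level : ∀ x, ∃ c, 0 ≤ c ∧ ENNReal.ofReal c ≤ N x ∧
      (x ∈ S \ (E ∪ Z) → x ∈ graphClosure u (H c)) := by
    intro x
    by_cases hNx : N x = ⊤
    · by_cases hx : x ∈ S \ (E ∪ Z)
      · have : x ∈ ⋃ n : ℕ, graphClosure u (H n) := by
          by_contra h
          exact hx.2 (Or.inr ⟨hx.1, h⟩)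
        obtain ⟨n, hn⟩ := mem_iUnion.1 this
        exact ⟨n, n.cast_nonneg, hNx ▸ le_top, fun _ => hn⟩
      · exact ⟨0, le_rfl, hNx ▸ le_top, fun h => absurd h hx⟩
    · exact ⟨(N x).toReal, ENNReal.toReal_nonneg, ENNReal.ofReal_toReal_le,
        fun hx => subset_graphClosure u _ (mem_H x ⟨hx.1, fun h => hx.2 (Or.inl h)⟩ hNx)⟩
  choose G hG0 hGN hGH using exists_level
  exact ⟨G, ⟨hG0, E ∪ Z, union_subset hES sdiff_subset, measure_union_null hE0 hZ,
    fun x hx y hy => hHolder _ _ x (hGH x hx) y (hGH y hy)⟩, hGN⟩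

end Gradients

/-- An `s`-gradient gives a fractional `s`-gradient as a constant sequence, and the
Hajłasz–Sobolev seminorm coincides with the Triebel–Lizorkin seminorm with `q = ∞`. -/
theorem hajlasz_eq_triebelLizorkin_infty
    {X : Type*} [MetricSpace X] [MeasurableSpace X] [BorelSpace X]
    (μ : Measure X) (S : Set X) (hS : MeasurableSet S)
    (s p : ℝ) (hs : 0 < s) (hp : 0 < p) (u : X → ℝ) (hu : Measurable u) :
    (∀ g : X → ℝ, IsSGradient μ S s u g →
      IsFractionalSGradient μ S s u (fun _ => g)) ∧
    TLSeminormInfty μ S s p u = HajlaszSeminorm μ S s p u := by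
  refine ⟨fun g hg => hg.isFractionalSGradient_const, le_antisymm ?_ ?_⟩
  · refine sInf_le_sInf ?_
    rintro _ ⟨g, hg, rfl⟩
    exact ⟨fun _ => g, hg.isFractionalSGradient_const, by simp only [iSup_const]⟩
  · refine le_sInf ?_
    rintro _ ⟨g, hg, rfl⟩
    by_cases hint : ∫⁻ x in S, (⨆ k, ENNReal.ofReal (g k x)) ^ p ∂μ = ⊤
    · simp [hint, ENNReal.top_rpow_of_pos, hp]
    obtain ⟨G, hG, hGN⟩ := hg.exists_isSGradient_le hS hs.le hp hu hint
    exact sInf_le_of_le ⟨G, hG, rfl⟩ <| ENNReal.rpow_le_rpow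
      (lintegral_mono fun x => ENNReal.rpow_le_rpow (hGN x) hp.le) (by positivity)
end

section
/- Let (X,d,μ) be a metric measure space, Ω a measurable set, and suppose the Morrey-type embedding holds for exponents 0 < s < 1, sp > Q: every f in the unit ball of M^s_{p,q}(Ω) satisfies |f(y) − f(z)| ≤ C₃ d(y,z)^{s−Q/p} for a.e. y, z ∈ Ω. Fix x ∈ Ω and r ∈ (0,1], and let u be the cut-off at scales r̃ ≤ r/4 < r as above, with ‖u‖_{M^s_{p,q}(Ω)} ≤ C μ(B(x,r) ∩ Ω)^{1/p} r^{−s}. If there exist points y ∈ B(x, r/4) ∩ Ω with u(y) = 1 and z ∈ (B(x, 3r/2) \ B(x,r)) ∩ Ω with u(z) = 0, then μ(B(x,r) ∩ Ω) ≥ c r^Q, where c depends only on C, C₃, s, p, Q. -/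
/-!
Put `α = s - Q/p > 0`. Testing the Morrey bound on `y` and `z`, which satisfy
`d(y,z) < 2r`, gives `1 ≤ C₃ N (2r)^α ≤ C C₃ 2^α μ(B(x,r)∩Ω)^{1/p} r^{α-s}`, and
`α - s = -Q/p`; raising to the power `p` yields `μ(B(x,r)∩Ω) ≥ (C C₃ 2^α)^{-p} r^Q`.
-/

open Metric MeasureTheory

lemma rpow_neg_mul_rpow_le_of_le_mul_rpow_one_div {a K M p : ℝ} (ha : 0 ≤ a) (hK : 0 < K)
    (hM : 0 ≤ M) (hp : 0 < p) (h : a ≤ K * M ^ (1 / p)) : K ^ (-p) * a ^ p ≤ M := by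
  have hdiv : a / K ≤ M ^ (1 / p) := by rwa [div_le_iff₀ hK, mul_comm]
  calc K ^ (-p) * a ^ p = (a / K) ^ p := by
        rw [Real.div_rpow ha hK.le, Real.rpow_neg hK.le, inv_mul_eq_div]
    _ ≤ (M ^ (1 / p)) ^ p := Real.rpow_le_rpow (by positivity) hdiv hp.le
    _ = M := by rw [← Real.rpow_mul hM, one_div_mul_cancel hp.ne', Real.rpow_one]

lemma rpow_le_mul_rpow_of_holder_test {C C₃ s p Q N M r d : ℝ} (hC₃ : 0 ≤ C₃)
    (hα : 0 < s - Q / p) (hr : 0 < r) (hN0 : 0 ≤ N) (hN : N ≤ C * M ^ (1 / p) * r ^ (-s))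
    (hd0 : 0 ≤ d) (hd : d ≤ 2 * r) (h1 : 1 ≤ C₃ * N * d ^ (s - Q / p)) :
    r ^ (Q / p) ≤ C * C₃ * 2 ^ (s - Q / p) * M ^ (1 / p) := by
  have hscale : r ^ (-s) * (2 * r) ^ (s - Q / p) * r ^ (Q / p) = 2 ^ (s - Q / p) := by
    rw [Real.mul_rpow zero_le_two hr.le, mul_left_comm, mul_assoc, ← Real.rpow_add hr,
      ← Real.rpow_add hr]
    ring_nf
    rw [Real.rpow_zero, mul_one]
  have hρ : 1 ≤ C * C₃ * M ^ (1 / p) * (r ^ (-s) * (2 * r) ^ (s - Q / p)) :=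
    calc 1 ≤ C₃ * N * d ^ (s - Q / p) := h1
      _ ≤ C₃ * N * (2 * r) ^ (s - Q / p) := by gcongr
      _ ≤ C₃ * (C * M ^ (1 / p) * r ^ (-s)) * (2 * r) ^ (s - Q / p) := by gcongr
      _ = _ := by ring
  calc r ^ (Q / p) ≤ C * C₃ * M ^ (1 / p) * (r ^ (-s) * (2 * r) ^ (s - Q / p)) * r ^ (Q / p) :=
        le_mul_of_one_le_left (by positivity) hρ
    _ = C * C₃ * 2 ^ (s - Q / p) * M ^ (1 / p) := by
        rw [mul_assoc _ _ (r ^ (Q / p)), hscale]; ring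

theorem measure_density_from_cutoff_test_general
    (C C₃ s p Q : ℝ) (hC : 0 < C) (hC₃ : 0 < C₃)
    (hp : 0 < p) (hspQ : Q < s * p) :
    ∃ c : ℝ, 0 < c ∧
      ∀ (X : Type) [inst : MetricSpace X] [instm : MeasurableSpace X]
        [instb : BorelSpace X] (μ : Measure X) (Ω : Set X)
        (u : X → ℝ) (N : ℝ) (x : X) (r : ℝ) (y z : X),
        0 < r → r ≤ 1 → x ∈ Ω →
        0 ≤ N →
        N ≤ C * (μ (ball x r ∩ Ω)).toReal ^ (1 / p) * r ^ (-s) →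
        (∀ y' ∈ Ω, ∀ z' ∈ Ω,
          |u y' - u z'| ≤ C₃ * N * dist y' z' ^ (s - Q / p)) →
        y ∈ ball x (r / 4) ∩ Ω → u y = 1 →
        z ∈ (ball x (3 * r / 2) \ ball x r) ∩ Ω → u z = 0 →
        ENNReal.ofReal (c * r ^ Q) ≤ μ (ball x r ∩ Ω) := by
  have hα : 0 < s - Q / p := by rw [sub_pos, div_lt_iff₀ hp]; exact hspQ
  have hK : 0 < C * C₃ * 2 ^ (s - Q / p) := by positivity
  refine ⟨(C * C₃ * 2 ^ (s - Q / p)) ^ (-p), by positivity, ?_⟩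
  intro X _ _ _ μ Ω u N x r y z hr _ _ hN0 hN hmorrey ⟨hyx, hyΩ⟩ huy ⟨⟨hzx, _⟩, hzΩ⟩ huz
  have hdist : dist y z ≤ 2 * r := by
    have := dist_triangle_right y z x
    rw [mem_ball] at hyx hzx
    linarith
  have htest : 1 ≤ C₃ * N * dist y z ^ (s - Q / p) := by
    simpa [huy, huz] using hmorrey y hyΩ z hzΩ
  have hdensity :=
    rpow_le_mul_rpow_of_holder_test hC₃.le hα hr hN0 hN dist_nonneg hdist htest
  refine ENNReal.ofReal_le_of_le_toReal ?_
  have := rpow_neg_mul_rpow_le_of_le_mul_rpow_one_div (by positivity) hK ENNReal.toReal_nonneg hp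
    hdensity
  rwa [← Real.rpow_mul hr.le, div_mul_cancel₀ Q hp.ne'] at this

/-- Case `sp > Q` of the measure-density theorem: testing the Morrey embedding
against the annular cut-off `u` (with norm `N ≤ C μ(B(x,r)∩Ω)^{1/p} r^{−s}`)
at points `y, z` with `u y = 1`, `u z = 0` yields `μ(B(x,r)∩Ω) ≥ c r^Q`. -/
theorem measure_density_from_cutoff_test
    (C C₃ s p Q : ℝ) (hC : 0 < C) (hC₃ : 0 < C₃)
    (hs0 : 0 < s) (hs1 : s < 1) (hp : 0 < p) (hQ : 0 < Q) (hspQ : Q < s * p) :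
    ∃ c : ℝ, 0 < c ∧
      ∀ (X : Type) [inst : MetricSpace X] [instm : MeasurableSpace X]
        [instb : BorelSpace X] (μ : Measure X) (Ω : Set X)
        (u : X → ℝ) (N : ℝ) (x : X) (r : ℝ) (y z : X),
        0 < r → r ≤ 1 → x ∈ Ω →
        0 ≤ N →
        N ≤ C * (μ (ball x r ∩ Ω)).toReal ^ (1 / p) * r ^ (-s) →
        (∀ y' ∈ Ω, ∀ z' ∈ Ω,
          |u y' - u z'| ≤ C₃ * N * dist y' z' ^ (s - Q / p)) →
        y ∈ ball x (r / 4) ∩ Ω → u y = 1 →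
        z ∈ (ball x (3 * r / 2) \ ball x r) ∩ Ω → u z = 0 →
        ENNReal.ofReal (c * r ^ Q) ≤ μ (ball x r ∩ Ω) :=
  measure_density_from_cutoff_test_general C C₃ s p Q hC hC₃ hp hspQ
end
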